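/- For every real x > 0, lim_{r→∞} r²·(h(⌊x·r²⌋)/h(1))·(⌊x·r²⌋/(r+1)³)·(1 − (r+1)^{−2})^{⌊x·r²⌋ − 1} = (2/√π)·√x·e^{−x}, where the limit is over integers r → ∞. -/

import Mathlib

/-!
Stirling's formula gives `√n · 4⁻ⁿ · C(2n, n) → 1/√π`. With `k = ⌊x r²⌋` we have `k / r² → x`,
so after writing `r² · k / (r+1)³ = √k · √(k / r²) · (r / (r+1))³` the polynomial factors tend
to `2 · (1/√π) · √x`. For the geometric factor, `(k - 1) · (r+1)⁻² → x` and
`(1 - t)ᵐ = exp (m · log (1 - t))` with `log (1 - t) ~ -t` give the limit `exp (-x)`.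
-/

/-- h(k) = 4^{−k}·binom(2k,k), with binom the central binomial coefficient. -/
noncomputable def hfun (k : ℕ) : ℝ := (Nat.choose (2 * k) k : ℝ) / 4 ^ k

open Filter Real Topology Stirling

theorem sqrt_mul_hfun_eq_stirlingSeq (n : ℕ) :
    √n * hfun n = stirlingSeq (2 * n) / stirlingSeq n ^ 2 := by
  rcases Nat.eq_zero_or_pos n with rfl | hn
  · simp
  have hsqrt : √(2 * ((2 * n : ℕ) : ℝ)) = 2 * √n := by
    rw [show 2 * ((2 * n : ℕ) : ℝ) = 2 ^ 2 * n by push_cast; ring, sqrt_mul (by positivity),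
      sqrt_sq zero_le_two]
  have hsq : √(2 * (n : ℝ)) ^ 2 = 2 * n := sq_sqrt (by positivity)
  have hsn : √(n : ℝ) ^ 2 = n := sq_sqrt (by positivity)
  rw [hfun, Nat.cast_choose ℝ (by omega : n ≤ 2 * n), show 2 * n - n = n by omega]
  simp only [stirlingSeq, hsqrt, div_pow, mul_pow, hsq]
  push_cast
  rw [mul_pow, pow_mul, pow_mul', pow_mul' (rexp 1)]
  field_simp
  rw [hsn]
  ring

theorem tendsto_sqrt_mul_hfun : Tendsto (fun n : ℕ ↦ √n * hfun n) atTop (𝓝 (1 / √π)) := by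
  have h2n : Tendsto (fun n : ℕ ↦ 2 * n) atTop atTop :=
    tendsto_id.const_mul_atTop' two_pos
  have hlim := (tendsto_stirlingSeq_sqrt_pi.comp h2n).div (tendsto_stirlingSeq_sqrt_pi.pow 2)
    (by positivity)
  rw [sq, div_mul_cancel_right₀ (by positivity), ← one_div] at hlim
  exact hlim.congr fun n ↦ (sqrt_mul_hfun_eq_stirlingSeq n).symm

theorem tendsto_one_sub_pow_of_tendsto_mul {α : Type*} {l : Filter α} {t : α → ℝ} {m : α → ℕ}
    {c : ℝ} (ht : Tendsto t l (𝓝 0)) (hmt : Tendsto (fun a ↦ m a * t a) l (𝓝 c)) :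
    Tendsto (fun a ↦ (1 - t a) ^ m a) l (𝓝 (exp (-c))) := by
  set f : ℝ → ℝ := fun s ↦ log (1 - s)
  have hf : HasDerivAt f (-1) 0 := by
    simpa using ((hasDerivAt_id (0 : ℝ)).const_sub 1).log (by norm_num)
  -- `log (1 - s) = s * dslope f 0 s` exactly, and `dslope f 0` is continuous at `0`
  have hslope : Tendsto (fun a ↦ dslope f 0 (t a)) l (𝓝 (-1)) := by
    have := (continuousAt_dslope_same.2 hf.differentiableAt).tendsto.comp ht
    rwa [dslope_same, hf.deriv] at this
  have hlog : Tendsto (fun a ↦ m a * log (1 - t a)) l (𝓝 (-c)) := by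
    refine (mul_neg_one c ▸ hmt.mul hslope).congr fun a ↦ ?_
    have := sub_smul_dslope f 0 (t a)
    simp only [f, sub_zero, smul_eq_mul, log_one] at this
    rw [mul_assoc, this]
  refine ((continuous_exp.tendsto _).comp hlog).congr' ?_
  filter_upwards [ht.eventually (gt_mem_nhds one_pos)] with a ha
  rw [Function.comp_apply, ← log_pow, exp_log (pow_pos (sub_pos.2 ha) _)]

theorem tendsto_natCast_add_one_zpow_neg_two :
    Tendsto (fun r : ℕ ↦ ((r : ℝ) + 1) ^ (-2 : ℤ)) atTop (𝓝 0) :=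
  (tendsto_zpow_atTop_zero (by norm_num)).comp
    (tendsto_atTop_add_const_right _ 1 tendsto_natCast_atTop_atTop)

theorem tendsto_sub_one_mul_natCast_add_one_zpow_neg_two {k : ℕ → ℕ} {x : ℝ} (hx : 0 < x)
    (hk : Tendsto (fun r : ℕ ↦ (k r : ℝ) / (r : ℝ) ^ 2) atTop (𝓝 x)) :
    Tendsto (fun r : ℕ ↦ ((k r - 1 : ℕ) : ℝ) * ((r : ℝ) + 1) ^ (-2 : ℤ)) atTop (𝓝 x) := by
  have hk1 : ∀ᶠ r in atTop, 1 ≤ k r := by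
    filter_upwards [hk.eventually (lt_mem_nhds hx)] with r hr
    by_contra! h
    simp [Nat.lt_one_iff.1 h] at hr
  have hlim := (hk.mul ((tendsto_natCast_div_add_atTop (1 : ℝ)).pow 2)).sub
    tendsto_natCast_add_one_zpow_neg_two
  rw [one_pow, mul_one, sub_zero] at hlim
  refine hlim.congr' ?_
  filter_upwards [hk1, eventually_ne_atTop 0] with r hk hr
  have hr' : (r : ℝ) ≠ 0 := Nat.cast_ne_zero.2 hr
  rw [Nat.cast_sub hk, zpow_neg, zpow_two]
  field_simp
  ring

theorem sq_mul_hfun_div_hfun_one_mul_div_cube (k r : ℕ) (hr : r ≠ 0) :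
    (r : ℝ) ^ 2 * (hfun k / hfun 1) * ((k : ℝ) / ((r : ℝ) + 1) ^ 3) =
      2 * (√k * hfun k) * √((k : ℝ) / (r : ℝ) ^ 2) * ((r : ℝ) / ((r : ℝ) + 1)) ^ 3 := by
  have hr' : (r : ℝ) ≠ 0 := Nat.cast_ne_zero.2 hr
  have hfun_one : hfun 1 = 1 / 2 := by norm_num [hfun]
  rw [hfun_one, sqrt_div' _ (sq_nonneg _), sqrt_sq (Nat.cast_nonneg r)]
  field_simp
  rw [sq_sqrt (Nat.cast_nonneg k)]

/-- For every x > 0,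
r²·(h(⌊x·r²⌋)/h(1))·(⌊x·r²⌋/(r+1)³)·(1 − (r+1)^{−2})^{⌊x·r²⌋−1}
→ (2/√π)·√x·e^{−x} as the integer r → ∞. -/
theorem perimeter_local_limit (x : ℝ) (hx : 0 < x) :
    Filter.Tendsto
      (fun r : ℕ =>
        (r : ℝ) ^ 2 * (hfun ⌊x * (r : ℝ) ^ 2⌋₊ / hfun 1) *
          ((⌊x * (r : ℝ) ^ 2⌋₊ : ℝ) / ((r : ℝ) + 1) ^ 3) *
          (1 - ((r : ℝ) + 1) ^ (-2 : ℤ)) ^ (⌊x * (r : ℝ) ^ 2⌋₊ - 1))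
      Filter.atTop (nhds (2 / Real.sqrt Real.pi * Real.sqrt x * Real.exp (-x))) := by
  have hr2 : Tendsto (fun r : ℕ ↦ (r : ℝ) ^ 2) atTop atTop :=
    (tendsto_pow_atTop two_ne_zero).comp tendsto_natCast_atTop_atTop
  have hk : Tendsto (fun r : ℕ ↦ (⌊x * (r : ℝ) ^ 2⌋₊ : ℝ) / (r : ℝ) ^ 2) atTop (𝓝 x) :=
    (tendsto_nat_floor_mul_div_atTop hx.le).comp hr2
  have hk_top : Tendsto (fun r : ℕ ↦ ⌊x * (r : ℝ) ^ 2⌋₊) atTop atTop :=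
    tendsto_nat_floor_atTop.comp (hr2.const_mul_atTop hx)
  have hlim := ((((tendsto_sqrt_mul_hfun.comp hk_top).const_mul 2).mul hk.sqrt).mul
    ((tendsto_natCast_div_add_atTop (1 : ℝ)).pow 3)).mul
    (tendsto_one_sub_pow_of_tendsto_mul tendsto_natCast_add_one_zpow_neg_two
      (tendsto_sub_one_mul_natCast_add_one_zpow_neg_two hx hk))
  rw [one_pow, mul_one, mul_one_div] at hlim
  refine hlim.congr' ?_
  filter_upwards [eventually_ne_atTop 0] with r hr
  rw [sq_mul_hfun_div_hfun_one_mul_div_cube _ _ hr]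
  rfl
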